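/- arXiv:2410.06525 — 4 statements merged into one kernel-verified Lean document; each statement's English description precedes it below -/
import Mathlib

section
/- Let X ∈ ℝ^{m×n} be T₁-sparse with parameters (v, t₁, t₂, c), let u > 0 satisfy m·u ≤ 1/64, and set γ_m := m·u/(1 − m·u). Suppose E ∈ ℝ^{n×n} satisfies the entrywise bound |E_{ij}| ≤ γ_m·Σ_{k=1}^{m} |x_{ki}|·|x_{kj}| for all i, j. Then ‖E‖₂ ≤ ‖E‖_F ≤ 1.1·m·u·(v·t₁ + n·t₂)·c². -/
open Matrix Finset

noncomputable def specNorm {m n : ℕ} (A : Matrix (Fin m) (Fin n) ℝ) : ℝ :=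
  ‖(Matrix.toEuclideanLin A).toContinuousLinearMap‖

noncomputable def frobNorm {m n : ℕ} (A : Matrix (Fin m) (Fin n) ℝ) : ℝ :=
  Real.sqrt (∑ i, ∑ j, (A i j) ^ 2)

noncomputable def gNorm {m n : ℕ} (A : Matrix (Fin m) (Fin n) ℝ) : ℝ :=
  ⨆ j : Fin n, Real.sqrt (∑ i, (A i j) ^ 2)

noncomputable def sigmaMin {m n : ℕ} (A : Matrix (Fin m) (Fin n) ℝ) : ℝ :=
  ⨅ x : Metric.sphere (0 : EuclideanSpace ℝ (Fin n)) 1,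
    ‖(Matrix.toEuclideanLin A) (x : EuclideanSpace ℝ (Fin n))‖

noncomputable def condNum {m n : ℕ} (A : Matrix (Fin m) (Fin n) ℝ) : ℝ :=
  specNorm A / sigmaMin A

def IsT1Sparse {m n : ℕ} (X : Matrix (Fin m) (Fin n) ℝ) (v t₁ t₂ : ℕ) (c : ℝ) : Prop :=
  ∃ S : Finset (Fin n), S.card = v ∧
    (∀ j ∈ S, Set.ncard {i | X i j ≠ 0} ≤ t₁) ∧
    (∀ j ∉ S, Set.ncard {i | X i j ≠ 0} ≤ t₂) ∧
    ∀ i j, |X i j| ≤ c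

lemma spec_le_frob {m n : ℕ} (A : Matrix (Fin m) (Fin n) ℝ) : specNorm A ≤ frobNorm A := by
  apply ContinuousLinearMap.opNorm_le_bound _ (Real.sqrt_nonneg _)
  intro x
  rw [LinearMap.coe_toContinuousLinearMap']
  rw [EuclideanSpace.norm_eq, EuclideanSpace.norm_eq]
  have hAx : ∀ i, Matrix.toEuclideanLin A x i = ∑ j, A i j * x j := by
    intro i
    rw [Matrix.toEuclideanLin_apply]
    rfl
  simp only [Real.norm_eq_abs, sq_abs, hAx]
  rw [← Real.sqrt_mul (by positivity)]
  apply Real.sqrt_le_sqrt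
  calc ∑ i, (∑ j, A i j * x j) ^ 2
      ≤ ∑ i, (∑ j, (A i j) ^ 2) * ∑ j, (x j) ^ 2 := by
        apply Finset.sum_le_sum
        intro i _
        exact Finset.sum_mul_sq_le_sq_mul_sq _ _ _
    _ = (∑ i, ∑ j, (A i j) ^ 2) * ∑ j, (x j) ^ 2 := by rw [Finset.sum_mul]

lemma col_sq_bound {m n : ℕ} (X : Matrix (Fin m) (Fin n) ℝ) (c : ℝ) (hc : 0 ≤ c)
    (j : Fin n) (t : ℕ) (hncard : Set.ncard {i | X i j ≠ 0} ≤ t)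
    (hb : ∀ i, |X i j| ≤ c) : ∑ i, (X i j) ^ 2 ≤ (t : ℝ) * c ^ 2 := by
  have h1 : ∑ i, (X i j) ^ 2 = ∑ i ∈ Finset.univ.filter (fun i => X i j ≠ 0), (X i j) ^ 2 := by
    rw [Finset.sum_filter_of_ne]
    intro i _ h
    exact fun h0 => h (by rw [h0]; ring)
  have hcard : ((Finset.univ.filter (fun i => X i j ≠ 0)).card : ℝ) ≤ (t : ℝ) := by
    have : {i | X i j ≠ 0} = ↑(Finset.univ.filter (fun i => X i j ≠ 0)) := by
      ext i; simp
    rw [this, Set.ncard_coe_finset] at hncard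
    exact_mod_cast hncard
  calc ∑ i, (X i j) ^ 2
      = ∑ i ∈ Finset.univ.filter (fun i => X i j ≠ 0), (X i j) ^ 2 := h1
    _ ≤ ∑ _i ∈ Finset.univ.filter (fun i => X i j ≠ 0), c ^ 2 := by
        apply Finset.sum_le_sum
        intro i _
        calc (X i j) ^ 2 = |X i j| ^ 2 := (sq_abs _).symm
          _ ≤ c ^ 2 := by apply pow_le_pow_left₀ (abs_nonneg _) (hb i)
    _ = ((Finset.univ.filter (fun i => X i j ≠ 0)).card : ℝ) * c ^ 2 := by
        rw [Finset.sum_const, nsmul_eq_mul]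
    _ ≤ (t : ℝ) * c ^ 2 := by apply mul_le_mul_of_nonneg_right hcard (by positivity)

/-- Bound on the rounding error matrix of the Gram matrix of a T₁-sparse X. -/
theorem stmt5 {m n : ℕ} (X : Matrix (Fin m) (Fin n) ℝ) (v t₁ t₂ : ℕ) (c u : ℝ)
    (hv1 : 1 ≤ v) (hvn : v ≤ n) (ht : t₂ ≤ t₁) (htm : t₁ ≤ m) (hc : 0 ≤ c)
    (hX : IsT1Sparse X v t₁ t₂ c) (hu : 0 < u) (hmu : (m : ℝ) * u ≤ 1 / 64)
    (E : Matrix (Fin n) (Fin n) ℝ)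
    (hE : ∀ i j, |E i j| ≤ ((m : ℝ) * u / (1 - (m : ℝ) * u)) * ∑ k, |X k i| * |X k j|) :
    specNorm E ≤ frobNorm E ∧
    frobNorm E ≤ 1.1 * m * u * ((v : ℝ) * t₁ + (n : ℝ) * t₂) * c ^ 2 := by
  obtain ⟨S, hScard, hS1, hS2, hbound⟩ := hX
  set γ : ℝ := (m : ℝ) * u / (1 - (m : ℝ) * u) with hγdef
  have hmu0 : (0 : ℝ) ≤ (m : ℝ) * u := by positivity
  have hden : (0 : ℝ) < 1 - (m : ℝ) * u := by linarith
  have hγ0 : 0 ≤ γ := div_nonneg hmu0 hden.le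
  have hγle : γ ≤ 1.1 * ((m : ℝ) * u) := by
    rw [hγdef, div_le_iff₀ hden]
    nlinarith
  -- column square sums
  set a : Fin n → ℝ := fun j => ∑ i, (X i j) ^ 2 with ha
  have ha0 : ∀ j, 0 ≤ a j := fun j => Finset.sum_nonneg fun i _ => sq_nonneg _
  set T : ℝ := ∑ j, a j with hT
  have hT0 : 0 ≤ T := Finset.sum_nonneg fun j _ => ha0 j
  have hTbound : T ≤ ((v : ℝ) * t₁ + (n : ℝ) * t₂) * c ^ 2 := by
    have : T = ∑ j ∈ S, a j + ∑ j ∈ Sᶜ, a j := by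
      rw [hT, ← Finset.sum_add_sum_compl S]
    rw [this]
    have h1 : ∑ j ∈ S, a j ≤ (v : ℝ) * ((t₁ : ℝ) * c ^ 2) := by
      calc ∑ j ∈ S, a j ≤ ∑ _j ∈ S, (t₁ : ℝ) * c ^ 2 :=
            Finset.sum_le_sum fun j hj =>
              col_sq_bound X c hc j t₁ (hS1 j hj) (fun i => hbound i j)
        _ = (v : ℝ) * ((t₁ : ℝ) * c ^ 2) := by
            rw [Finset.sum_const, nsmul_eq_mul, hScard]
    have h2 : ∑ j ∈ Sᶜ, a j ≤ (n : ℝ) * ((t₂ : ℝ) * c ^ 2) := by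
      calc ∑ j ∈ Sᶜ, a j ≤ ∑ _j ∈ Sᶜ, (t₂ : ℝ) * c ^ 2 :=
            Finset.sum_le_sum fun j hj =>
              col_sq_bound X c hc j t₂ (hS2 j (Finset.mem_compl.mp hj)) (fun i => hbound i j)
        _ = (Sᶜ.card : ℝ) * ((t₂ : ℝ) * c ^ 2) := by
            rw [Finset.sum_const, nsmul_eq_mul]
        _ ≤ (n : ℝ) * ((t₂ : ℝ) * c ^ 2) := by
            apply mul_le_mul_of_nonneg_right _ (by positivity)
            exact_mod_cast Nat.cast_le.mpr (le_trans (Finset.card_le_univ _) (by simp))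
    nlinarith
  have hfrob : frobNorm E ≤ γ * T := by
    rw [frobNorm]
    have hsq : ∑ i, ∑ j, (E i j) ^ 2 ≤ (γ * T) ^ 2 := by
      have key : ∀ i j : Fin n, (E i j) ^ 2 ≤ γ ^ 2 * (a i * a j) := by
        intro i j
        have h1 : (E i j) ^ 2 ≤ (γ * ∑ k, |X k i| * |X k j|) ^ 2 := by
          rw [← sq_abs (E i j)]
          apply pow_le_pow_left₀ (abs_nonneg _) (hE i j)
        have h2 : (∑ k, |X k i| * |X k j|) ^ 2 ≤ a i * a j := by
          have := Finset.sum_mul_sq_le_sq_mul_sq Finset.univ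
            (fun k => |X k i|) (fun k => |X k j|)
          simpa [ha, sq_abs] using this
        calc (E i j) ^ 2 ≤ (γ * ∑ k, |X k i| * |X k j|) ^ 2 := h1
          _ = γ ^ 2 * (∑ k, |X k i| * |X k j|) ^ 2 := by ring
          _ ≤ γ ^ 2 * (a i * a j) := by
              apply mul_le_mul_of_nonneg_left h2 (by positivity)
      calc ∑ i, ∑ j, (E i j) ^ 2 ≤ ∑ i, ∑ j, γ ^ 2 * (a i * a j) :=
            Finset.sum_le_sum fun i _ => Finset.sum_le_sum fun j _ => key i j
        _ = (γ * T) ^ 2 := by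
            simp_rw [← Finset.mul_sum, ← Finset.sum_mul, hT]
            ring
    calc Real.sqrt (∑ i, ∑ j, (E i j) ^ 2) ≤ Real.sqrt ((γ * T) ^ 2) :=
          Real.sqrt_le_sqrt hsq
      _ = γ * T := Real.sqrt_sq (by positivity)
  refine ⟨spec_le_frob E, ?_⟩
  calc frobNorm E ≤ γ * T := hfrob
    _ ≤ 1.1 * ((m : ℝ) * u) * T := mul_le_mul_of_nonneg_right hγle hT0
    _ ≤ 1.1 * ((m : ℝ) * u) * (((v : ℝ) * t₁ + (n : ℝ) * t₂) * c ^ 2) := by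
        apply mul_le_mul_of_nonneg_left hTbound (by positivity)
    _ = 1.1 * m * u * ((v : ℝ) * t₁ + (n : ℝ) * t₂) * c ^ 2 := by ring
end

section
/- Let X ∈ ℝ^{m×n}, Y ∈ ℝ^{n×n}, E ∈ ℝ^{n×n} and s > 0 satisfy YᵀY = XᵀX + s·I + E with ‖E‖₂ ≤ 0.1·s. Then Y is invertible and ‖X·Y⁻¹‖₂ ≤ 1.5. -/
open Matrix Finset

/-!
Evaluating the Gram identity on a vector `v` gives
`‖Y v‖² = ‖X v‖² + s ‖v‖² + ⟪v, E v⟫ ≥ ‖X v‖² + 0.9 s ‖v‖²`.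
Hence `Y v = 0` forces `v = 0`, so `Y` is invertible, and `‖X v‖ ≤ ‖Y v‖` for all `v`;
substituting `v = Y⁻¹ w` gives `‖X Y⁻¹‖₂ ≤ 1`.
-/

section EuclideanMatrix

variable {m n : Type*} [Fintype m] [Fintype n] [DecidableEq n]

lemma norm_toEuclideanLin_sq [DecidableEq m] (A : Matrix m n ℝ) (v : EuclideanSpace ℝ n) :
    ‖toEuclideanLin A v‖ ^ 2 = inner ℝ v (toEuclideanLin (Aᵀ * A) v) := by
  rw [toLpLin_mul_same, LinearMap.comp_apply, ← conjTranspose_eq_transpose_of_trivial,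
    toEuclideanLin_conjTranspose_eq_adjoint, LinearMap.adjoint_inner_right,
    real_inner_self_eq_norm_sq]

lemma abs_inner_toEuclideanLin_self_le (E : Matrix n n ℝ) (v : EuclideanSpace ℝ n) :
    |inner ℝ v (toEuclideanLin E v)| ≤ ‖(toEuclideanLin E).toContinuousLinearMap‖ * ‖v‖ ^ 2 :=
  calc |inner ℝ v (toEuclideanLin E v)|
      ≤ ‖v‖ * ‖(toEuclideanLin E).toContinuousLinearMap v‖ := abs_real_inner_le_norm _ _
    _ ≤ ‖v‖ * (‖(toEuclideanLin E).toContinuousLinearMap‖ * ‖v‖) := by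
      gcongr; exact ContinuousLinearMap.le_opNorm _ _
    _ = ‖(toEuclideanLin E).toContinuousLinearMap‖ * ‖v‖ ^ 2 := by ring

section Gram

variable [DecidableEq m] {X : Matrix m n ℝ} {Y E : Matrix n n ℝ} {s : ℝ}

lemma sub_opNorm_mul_norm_sq_le_of_gram_eq
    (hGram : Yᵀ * Y = Xᵀ * X + s • (1 : Matrix n n ℝ) + E) (v : EuclideanSpace ℝ n) :
    (s - ‖(toEuclideanLin E).toContinuousLinearMap‖) * ‖v‖ ^ 2
      ≤ ‖toEuclideanLin Y v‖ ^ 2 - ‖toEuclideanLin X v‖ ^ 2 := by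
  have hGram_v : ‖toEuclideanLin Y v‖ ^ 2
      = ‖toEuclideanLin X v‖ ^ 2 + s * ‖v‖ ^ 2 + inner ℝ v (toEuclideanLin E v) := by
    rw [norm_toEuclideanLin_sq, hGram, norm_toEuclideanLin_sq, map_add, map_add, map_smul,
      toLpLin_one, LinearMap.add_apply, LinearMap.add_apply, LinearMap.smul_apply,
      LinearMap.id_apply, inner_add_right, inner_add_right, inner_smul_right,
      real_inner_self_eq_norm_sq]
  have := neg_abs_le (inner ℝ v (toEuclideanLin E v))
  have := abs_inner_toEuclideanLin_self_le E v
  linarith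

lemma norm_toEuclideanLin_le_of_gram_eq
    (hGram : Yᵀ * Y = Xᵀ * X + s • (1 : Matrix n n ℝ) + E)
    (hE : ‖(toEuclideanLin E).toContinuousLinearMap‖ ≤ s) (v : EuclideanSpace ℝ n) :
    ‖toEuclideanLin X v‖ ≤ ‖toEuclideanLin Y v‖ := by
  rw [← pow_le_pow_iff_left₀ (norm_nonneg _) (norm_nonneg _) two_ne_zero]
  nlinarith [sub_opNorm_mul_norm_sq_le_of_gram_eq hGram v, sq_nonneg ‖v‖]

lemma isUnit_of_gram_eq (hGram : Yᵀ * Y = Xᵀ * X + s • (1 : Matrix n n ℝ) + E)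
    (hE : ‖(toEuclideanLin E).toContinuousLinearMap‖ < s) : IsUnit Y := by
  refine mulVec_injective_iff_isUnit.mp <|
    (injective_iff_map_eq_zero Y.mulVecLin).mpr fun v hv => ?_
  have hbound := sub_opNorm_mul_norm_sq_le_of_gram_eq hGram (WithLp.toLp 2 v)
  rw [toLpLin_toLp, toLin'_apply, ← mulVecLin_apply, hv, WithLp.toLp_zero, norm_zero] at hbound
  have : (s - ‖(toEuclideanLin E).toContinuousLinearMap‖) * ‖WithLp.toLp 2 v‖ ^ 2 ≤ 0 := by
    nlinarith [sq_nonneg ‖toEuclideanLin X (WithLp.toLp 2 v)‖]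
  simpa using nonpos_of_mul_nonpos_right this (sub_pos.mpr hE)

end Gram

lemma opNorm_toEuclideanLin_mul_inv_le {X : Matrix m n ℝ} {Y : Matrix n n ℝ} (hY : IsUnit Y)
    {c : ℝ} (hc : 0 ≤ c) (hXY : ∀ v, ‖toEuclideanLin X v‖ ≤ c * ‖toEuclideanLin Y v‖) :
    ‖(toEuclideanLin (X * Y⁻¹)).toContinuousLinearMap‖ ≤ c := by
  refine ContinuousLinearMap.opNorm_le_bound _ hc fun w => ?_
  have hYY : toEuclideanLin Y (toEuclideanLin Y⁻¹ w) = w := by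
    rw [← LinearMap.comp_apply, ← toLpLin_mul_same,
      mul_nonsing_inv Y ((isUnit_iff_isUnit_det Y).mp hY), toLpLin_one, LinearMap.id_apply]
  simpa only [LinearMap.coe_toContinuousLinearMap', toLpLin_mul_same, LinearMap.comp_apply, hYY]
    using hXY (toEuclideanLin Y⁻¹ w)

end EuclideanMatrix

/-- Y is invertible and ‖X·Y⁻¹‖₂ ≤ 1.5. -/
theorem stmt10 {m n : ℕ} (X : Matrix (Fin m) (Fin n) ℝ) (Y E : Matrix (Fin n) (Fin n) ℝ)
    (s : ℝ) (hs : 0 < s)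
    (hGram : Yᵀ * Y = Xᵀ * X + s • (1 : Matrix (Fin n) (Fin n) ℝ) + E)
    (hE : specNorm E ≤ 0.1 * s) :
    IsUnit Y ∧ specNorm (X * Y⁻¹) ≤ 1.5 := by
  have hgap : specNorm E < s := by linarith
  have hY : IsUnit Y := isUnit_of_gram_eq hGram hgap
  refine ⟨hY, le_trans ?_ (by norm_num : (1 : ℝ) ≤ 1.5)⟩
  exact opNorm_toEuclideanLin_mul_inv_le hY zero_le_one fun v => by
    simpa only [one_mul] using norm_toEuclideanLin_le_of_gram_eq hGram hgap.le v
end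

section
/- Let X ∈ ℝ^{m×n}, Y ∈ ℝ^{n×n}, E ∈ ℝ^{n×n} and s > 0 satisfy YᵀY = XᵀX + s·I + E with ‖E‖₂ ≤ 0.1·s. Then Y is invertible and σ_min(X·Y⁻¹) ≥ 0.9·σ_min(X)/√(σ_min(X)² + s). -/
open Matrix Finset

/-!
Write `σ = σ_min(X)` and `ε = ‖E‖₂`. Testing the Gram identity against `v` gives
`‖Y v‖² = ‖X v‖² + s ‖v‖² + ⟪E v, v⟫`, so `‖X v‖² + (s - ε)‖v‖² ≤ ‖Y v‖² ≤ ‖X v‖² + (s + ε)‖v‖²`.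
The lower bound makes `Y` injective, hence invertible. Combining the upper bound with
`σ ‖v‖ ≤ ‖X v‖` gives `σ² ‖Y v‖² ≤ (σ² + s + ε) ‖X v‖²`; substituting `v = Y⁻¹ u` and using
`0.81 (σ² + 1.1 s) ≤ σ² + s` yields `0.9 σ ‖u‖ ≤ √(σ² + s) ‖X Y⁻¹ u‖`.
-/

open scoped RealInnerProductSpace

section EuclideanLin

variable {𝕜 l m n : Type*} [RCLike 𝕜] [Fintype m] [Fintype n] [DecidableEq m] [DecidableEq n]

theorem Matrix.toEuclideanLin_mul_apply [Fintype l] [DecidableEq l] (A : Matrix l m 𝕜)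
    (B : Matrix m n 𝕜) (v : EuclideanSpace 𝕜 n) :
    toEuclideanLin (A * B) v = toEuclideanLin A (toEuclideanLin B v) := by
  rw [toLpLin_mul_same]
  rfl

theorem Matrix.isUnit_of_injective_toEuclideanLin {A : Matrix n n 𝕜}
    (h : Function.Injective (toEuclideanLin A)) : IsUnit A :=
  mulVec_injective_iff_isUnit.1 fun _ _ hvw =>
    WithLp.toLp_injective 2 (h (congrArg (WithLp.toLp 2) hvw))

theorem Matrix.inner_toEuclideanLin_transpose_mul_self (A : Matrix m n ℝ)
    (v : EuclideanSpace ℝ n) :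
    ⟪toEuclideanLin (Aᵀ * A) v, v⟫ = ‖toEuclideanLin A v‖ ^ 2 := by
  rw [toEuclideanLin_mul_apply, ← conjTranspose_eq_transpose_of_trivial,
    toEuclideanLin_conjTranspose_eq_adjoint, LinearMap.adjoint_inner_left,
    real_inner_self_eq_norm_sq]

end EuclideanLin

section Norms

variable {m n : ℕ}

theorem norm_toEuclideanLin_le_specNorm (A : Matrix (Fin m) (Fin n) ℝ)
    (v : EuclideanSpace ℝ (Fin n)) : ‖toEuclideanLin A v‖ ≤ specNorm A * ‖v‖ :=
  (toEuclideanLin A).toContinuousLinearMap.le_opNorm v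

theorem abs_inner_toEuclideanLin_le_specNorm (A : Matrix (Fin n) (Fin n) ℝ)
    (v : EuclideanSpace ℝ (Fin n)) : |⟪toEuclideanLin A v, v⟫| ≤ specNorm A * ‖v‖ ^ 2 :=
  calc |⟪toEuclideanLin A v, v⟫| ≤ ‖toEuclideanLin A v‖ * ‖v‖ := abs_real_inner_le_norm _ _
    _ ≤ specNorm A * ‖v‖ * ‖v‖ := by
        gcongr
        exact norm_toEuclideanLin_le_specNorm A v
    _ = specNorm A * ‖v‖ ^ 2 := by ring

theorem sigmaMin_nonneg (A : Matrix (Fin m) (Fin n) ℝ) : 0 ≤ sigmaMin A :=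
  Real.iInf_nonneg fun _ => norm_nonneg _

theorem sigmaMin_mul_norm_le (A : Matrix (Fin m) (Fin n) ℝ) (v : EuclideanSpace ℝ (Fin n)) :
    sigmaMin A * ‖v‖ ≤ ‖toEuclideanLin A v‖ := by
  rcases eq_or_ne v 0 with rfl | hv
  · simp
  have hv' : 0 < ‖v‖ := norm_pos_iff.2 hv
  have hunit : ‖v‖⁻¹ • v ∈ Metric.sphere (0 : EuclideanSpace ℝ (Fin n)) 1 := by
    simp [norm_smul, hv'.ne']
  have hle : sigmaMin A ≤ ‖v‖⁻¹ * ‖toEuclideanLin A v‖ := by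
    have := ciInf_le (f := fun x : Metric.sphere (0 : EuclideanSpace ℝ (Fin n)) 1 =>
      ‖toEuclideanLin A x‖) ⟨0, by rintro _ ⟨x, rfl⟩; exact norm_nonneg _⟩ ⟨_, hunit⟩
    simpa [sigmaMin, norm_smul, hv'.le] using this
  rwa [← le_div_iff₀ hv', div_eq_inv_mul]

theorem le_sigmaMin [Nonempty (Metric.sphere (0 : EuclideanSpace ℝ (Fin n)) 1)]
    {A : Matrix (Fin m) (Fin n) ℝ} {c : ℝ}
    (h : ∀ v : EuclideanSpace ℝ (Fin n), c * ‖v‖ ≤ ‖toEuclideanLin A v‖) : c ≤ sigmaMin A :=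
  le_ciInf fun ⟨v, hv⟩ => by simpa [mem_sphere_zero_iff_norm.1 hv] using h v

end Norms

section Gram

variable {m n : ℕ} {X : Matrix (Fin m) (Fin n) ℝ} {Y E : Matrix (Fin n) (Fin n) ℝ} {s : ℝ}

theorem norm_sq_eq_of_gram (hGram : Yᵀ * Y = Xᵀ * X + s • 1 + E) (v : EuclideanSpace ℝ (Fin n)) :
    ‖toEuclideanLin Y v‖ ^ 2 =
      ‖toEuclideanLin X v‖ ^ 2 + s * ‖v‖ ^ 2 + ⟪toEuclideanLin E v, v⟫ := by
  rw [← inner_toEuclideanLin_transpose_mul_self, hGram, ← inner_toEuclideanLin_transpose_mul_self]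
  simp [inner_add_left, real_inner_smul_left]

theorem le_norm_sq_of_gram (hGram : Yᵀ * Y = Xᵀ * X + s • 1 + E) (v : EuclideanSpace ℝ (Fin n)) :
    ‖toEuclideanLin X v‖ ^ 2 + (s - specNorm E) * ‖v‖ ^ 2 ≤ ‖toEuclideanLin Y v‖ ^ 2 := by
  have := (abs_le.1 (abs_inner_toEuclideanLin_le_specNorm E v)).1
  rw [norm_sq_eq_of_gram hGram]
  linarith

theorem norm_sq_le_of_gram (hGram : Yᵀ * Y = Xᵀ * X + s • 1 + E) (v : EuclideanSpace ℝ (Fin n)) :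
    ‖toEuclideanLin Y v‖ ^ 2 ≤ ‖toEuclideanLin X v‖ ^ 2 + (s + specNorm E) * ‖v‖ ^ 2 := by
  have := (abs_le.1 (abs_inner_toEuclideanLin_le_specNorm E v)).2
  rw [norm_sq_eq_of_gram hGram]
  linarith

theorem isUnit_of_gram (hGram : Yᵀ * Y = Xᵀ * X + s • 1 + E) (hE : specNorm E < s) :
    IsUnit Y := by
  refine isUnit_of_injective_toEuclideanLin <| (injective_iff_map_eq_zero _).2 fun v hv => ?_
  have hle := le_norm_sq_of_gram hGram v
  rw [hv, norm_zero] at hle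
  have hv2 : ‖v‖ ^ 2 ≤ 0 := by
    nlinarith [sq_nonneg ‖toEuclideanLin X v‖, sub_pos.2 hE]
  exact norm_eq_zero.1 (pow_eq_zero_iff two_ne_zero |>.1 (hv2.antisymm (sq_nonneg _)))

theorem sigmaMin_sq_mul_norm_sq_le_of_gram (hs : 0 ≤ s) (hGram : Yᵀ * Y = Xᵀ * X + s • 1 + E)
    (v : EuclideanSpace ℝ (Fin n)) :
    sigmaMin X ^ 2 * ‖toEuclideanLin Y v‖ ^ 2 ≤
      (sigmaMin X ^ 2 + s + specNorm E) * ‖toEuclideanLin X v‖ ^ 2 := by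
  have hX : sigmaMin X ^ 2 * ‖v‖ ^ 2 ≤ ‖toEuclideanLin X v‖ ^ 2 := by
    rw [← mul_pow]
    exact pow_le_pow_left₀ (by positivity [sigmaMin_nonneg X]) (sigmaMin_mul_norm_le X v) 2
  have hsE : 0 ≤ s + specNorm E := add_nonneg hs (norm_nonneg _)
  nlinarith [mul_le_mul_of_nonneg_left (norm_sq_le_of_gram hGram v) (sq_nonneg (sigmaMin X)),
    mul_le_mul_of_nonneg_left hX hsE]

end Gram

theorem mul_div_sqrt_mul_le_of_sq_mul_sq_le {σ s x y : ℝ} (hs : 0 < s) (hx : 0 ≤ x)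
    (h : σ ^ 2 * y ^ 2 ≤ (σ ^ 2 + 1.1 * s) * x ^ 2) :
    0.9 * σ / Real.sqrt (σ ^ 2 + s) * y ≤ x := by
  have hq : 0 < Real.sqrt (σ ^ 2 + s) := Real.sqrt_pos.2 (by positivity)
  rw [div_mul_eq_mul_div, div_le_iff₀ hq]
  refine (le_abs_self _).trans (abs_le_of_sq_le_sq ?_ (by positivity))
  rw [mul_pow x, Real.sq_sqrt (by positivity)]
  nlinarith [mul_nonneg (sq_nonneg σ) (sq_nonneg x), mul_nonneg hs.le (sq_nonneg x)]

/-- Y is invertible and σ_min(X·Y⁻¹) ≥ 0.9·σ_min(X)/√(σ_min(X)² + s). -/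
theorem stmt11 {m n : ℕ} (X : Matrix (Fin m) (Fin n) ℝ) (Y E : Matrix (Fin n) (Fin n) ℝ)
    (s : ℝ) (hs : 0 < s)
    (hGram : Yᵀ * Y = Xᵀ * X + s • (1 : Matrix (Fin n) (Fin n) ℝ) + E)
    (hE : specNorm E ≤ 0.1 * s) :
    IsUnit Y ∧
    0.9 * sigmaMin X / Real.sqrt (sigmaMin X ^ 2 + s) ≤ sigmaMin (X * Y⁻¹) := by
  have hY : IsUnit Y := isUnit_of_gram hGram (by linarith)
  refine ⟨hY, ?_⟩
  rcases isEmpty_or_nonempty (Metric.sphere (0 : EuclideanSpace ℝ (Fin n)) 1) with _ | _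
  · simp [sigmaMin, Real.iInf_of_isEmpty]
  have hdet : IsUnit Y.det := (isUnit_iff_isUnit_det Y).1 hY
  refine le_sigmaMin fun u => ?_
  obtain ⟨w, rfl⟩ : ∃ w, toEuclideanLin Y w = u :=
    ⟨toEuclideanLin Y⁻¹ u, by rw [← toEuclideanLin_mul_apply, mul_nonsing_inv _ hdet]; simp⟩
  rw [← toEuclideanLin_mul_apply, Matrix.mul_assoc, nonsing_inv_mul _ hdet, Matrix.mul_one]
  refine mul_div_sqrt_mul_le_of_sq_mul_sq_le hs (norm_nonneg _) ?_
  refine (sigmaMin_sq_mul_norm_sq_le_of_gram hs.le hGram w).trans ?_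
  exact mul_le_mul_of_nonneg_right (by linarith) (sq_nonneg _)
end

section
/- Let X, W, V, Q ∈ ℝ^{m×n} and Y, D, N, J, R ∈ ℝ^{n×n}, and define E₃ := V·D − W, E₄ := D·Y − N, E₇ := Q·J − V, E₈ := J·N − R. Then Q·R = W·Y + E₃·Y − V·E₄ + E₇·N − Q·E₈, and consequently ‖Q·R − X‖_F ≤ ‖W·Y − X‖_F + ‖E₃‖_F·‖Y‖₂ + ‖V‖₂·‖E₄‖_F + ‖E₇‖_F·‖N‖₂ + ‖Q‖₂·‖E₈‖_F. -/
open Matrix Finset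

lemma frobNorm_nonneg {m n : ℕ} (A : Matrix (Fin m) (Fin n) ℝ) : 0 ≤ frobNorm A :=
  Real.sqrt_nonneg _

lemma specNorm_nonneg {m n : ℕ} (A : Matrix (Fin m) (Fin n) ℝ) : 0 ≤ specNorm A :=
  norm_nonneg _

lemma frobNorm_eq_norm {m n : ℕ} (A : Matrix (Fin m) (Fin n) ℝ) :
    frobNorm A = ‖(WithLp.equiv 2 (Fin m × Fin n → ℝ)).symm (fun p => A p.1 p.2)‖ := by
  rw [EuclideanSpace.norm_eq, frobNorm, Fintype.sum_prod_type]
  simp [sq_abs]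

lemma frobNorm_add_le {m n : ℕ} (A B : Matrix (Fin m) (Fin n) ℝ) :
    frobNorm (A + B) ≤ frobNorm A + frobNorm B := by
  simp only [frobNorm_eq_norm]
  have : ((WithLp.equiv 2 (Fin m × Fin n → ℝ)).symm (fun p => (A + B) p.1 p.2)) =
      ((WithLp.equiv 2 (Fin m × Fin n → ℝ)).symm (fun p => A p.1 p.2)) +
      ((WithLp.equiv 2 (Fin m × Fin n → ℝ)).symm (fun p => B p.1 p.2)) := rfl
  rw [this]
  exact norm_add_le _ _

lemma frobNorm_neg {m n : ℕ} (A : Matrix (Fin m) (Fin n) ℝ) :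
    frobNorm (-A) = frobNorm A := by
  simp [frobNorm]

lemma spec_mul_frob {m n k : ℕ} (A : Matrix (Fin m) (Fin n) ℝ) (B : Matrix (Fin n) (Fin k) ℝ) :
    frobNorm (A * B) ≤ specNorm A * frobNorm B := by
  have key : ∀ j : Fin k, ∑ i, ((A * B) i j) ^ 2 ≤ specNorm A ^ 2 * ∑ i, (B i j) ^ 2 := by
    intro j
    set x : EuclideanSpace ℝ (Fin n) := (WithLp.equiv 2 (Fin n → ℝ)).symm (fun i => B i j)
    have hx : ‖x‖ ^ 2 = ∑ i, (B i j) ^ 2 := by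
      rw [EuclideanSpace.norm_eq, Real.sq_sqrt (by positivity)]
      simp [x, sq_abs]
    have hAx : ‖Matrix.toEuclideanLin A x‖ ^ 2 = ∑ i, ((A * B) i j) ^ 2 := by
      rw [EuclideanSpace.norm_eq, Real.sq_sqrt (by positivity)]
      refine Finset.sum_congr rfl fun i _ => ?_
      have : (Matrix.toEuclideanLin A x) i = (A * B) i j := by
        simp [x, Matrix.toEuclideanLin_apply, Matrix.mulVec, Matrix.mul_apply, dotProduct]
      rw [this]; rw [Real.norm_eq_abs, sq_abs]
    have hle : ‖Matrix.toEuclideanLin A x‖ ≤ specNorm A * ‖x‖ := by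
      have := ((Matrix.toEuclideanLin A).toContinuousLinearMap).le_opNorm x
      simpa [specNorm] using this
    calc ∑ i, ((A * B) i j) ^ 2 = ‖Matrix.toEuclideanLin A x‖ ^ 2 := hAx.symm
      _ ≤ (specNorm A * ‖x‖) ^ 2 := by
          exact pow_le_pow_left₀ (norm_nonneg _) hle 2
      _ = specNorm A ^ 2 * ∑ i, (B i j) ^ 2 := by rw [mul_pow, hx]
  rw [frobNorm, frobNorm, Finset.sum_comm]
  calc Real.sqrt (∑ j, ∑ i, ((A * B) i j) ^ 2)
      ≤ Real.sqrt (∑ j, specNorm A ^ 2 * ∑ i, (B i j) ^ 2) := by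
        exact Real.sqrt_le_sqrt (Finset.sum_le_sum fun j _ => key j)
    _ = specNorm A * Real.sqrt (∑ i, ∑ j, (B i j) ^ 2) := by
        rw [← Finset.mul_sum, Real.sqrt_mul (by positivity),
          Real.sqrt_sq (specNorm_nonneg A), Finset.sum_comm]

lemma frobNorm_transpose {m n : ℕ} (A : Matrix (Fin m) (Fin n) ℝ) :
    frobNorm Aᵀ = frobNorm A := by
  rw [frobNorm, frobNorm, Finset.sum_comm]
  rfl

open scoped Matrix.Norms.L2Operator in
lemma specNorm_transpose {m n : ℕ} (A : Matrix (Fin m) (Fin n) ℝ) :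
    specNorm Aᵀ = specNorm A := by
  have h1 : specNorm Aᵀ = ‖Aᵀ‖ := rfl
  have h2 : specNorm A = ‖A‖ := rfl
  have h3 : Aᵀ = Aᴴ := by ext i j; simp [Matrix.conjTranspose_apply]
  rw [h1, h2, h3, Matrix.l2_opNorm_conjTranspose]

lemma frob_mul_spec {m n k : ℕ} (A : Matrix (Fin m) (Fin n) ℝ) (B : Matrix (Fin n) (Fin k) ℝ) :
    frobNorm (A * B) ≤ frobNorm A * specNorm B := by
  calc frobNorm (A * B) = frobNorm ((A * B)ᵀ) := (frobNorm_transpose _).symm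
    _ = frobNorm (Bᵀ * Aᵀ) := by rw [Matrix.transpose_mul]
    _ ≤ specNorm Bᵀ * frobNorm Aᵀ := spec_mul_frob _ _
    _ = frobNorm A * specNorm B := by
        rw [specNorm_transpose, frobNorm_transpose, mul_comm]

/-- Exact residual decomposition of Shifted CholeskyQR3 and the resulting
Frobenius-norm bound. -/
theorem stmt19 {m n : ℕ} (X W V Q : Matrix (Fin m) (Fin n) ℝ)
    (Y D N J R : Matrix (Fin n) (Fin n) ℝ) :
    Q * R = W * Y + (V * D - W) * Y - V * (D * Y - N) + (Q * J - V) * N - Q * (J * N - R) ∧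
    frobNorm (Q * R - X) ≤ frobNorm (W * Y - X)
      + frobNorm (V * D - W) * specNorm Y
      + specNorm V * frobNorm (D * Y - N)
      + frobNorm (Q * J - V) * specNorm N
      + specNorm Q * frobNorm (J * N - R) := by
  have h1 : Q * R = W * Y + (V * D - W) * Y - V * (D * Y - N) + (Q * J - V) * N
      - Q * (J * N - R) := by simp [Matrix.sub_mul, Matrix.mul_sub, Matrix.mul_assoc]
  refine ⟨h1, ?_⟩
  have h2 : Q * R - X = (W * Y - X) + ((V * D - W) * Y + (-(V * (D * Y - N)) +
      ((Q * J - V) * N + -(Q * (J * N - R))))) := by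
    rw [h1]; simp [Matrix.sub_mul, Matrix.mul_sub, Matrix.mul_assoc]
  rw [h2]
  have t1 := frobNorm_add_le (W * Y - X) ((V * D - W) * Y + (-(V * (D * Y - N)) +
      ((Q * J - V) * N + -(Q * (J * N - R)))))
  have t2 := frobNorm_add_le ((V * D - W) * Y) (-(V * (D * Y - N)) +
      ((Q * J - V) * N + -(Q * (J * N - R))))
  have t3 := frobNorm_add_le (-(V * (D * Y - N))) ((Q * J - V) * N + -(Q * (J * N - R)))
  have t4 := frobNorm_add_le ((Q * J - V) * N) (-(Q * (J * N - R)))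
  have m1 := frob_mul_spec (V * D - W) Y
  have m2 := spec_mul_frob V (D * Y - N)
  have m3 := frob_mul_spec (Q * J - V) N
  have m4 := spec_mul_frob Q (J * N - R)
  rw [frobNorm_neg] at t3 t4
  linarith
end
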